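/- arXiv:1708.06540 — 2 statements merged into one kernel-verified Lean document; each statement's English description precedes it below -/
import Mathlib

section
/- Let 𝕊ₖ be a random walk with i.i.d. steps satisfying λ(α₀) = 𝔼[e^{α₀ X}] < ∞ and λ(β) = 𝔼[e^{β X}] < ∞ for some 0 < α₀ < β. Then for all real u, v and integers n > L ≥ 1: ℙ[𝕊_{n−L} ≤ u − v, 𝕊ₙ > u] ≤ ∑_{m=0}^{∞} λ(α₀)^{n−L} e^{−α₀(u − v) + α₀(m+1)} · λ(β)^{L} e^{−β v − β m}, which equals λ(α₀)^{n−L} λ(β)^{L} e^{−α₀ u} e^{(α₀−β)v} · e^{α₀}/(1 − e^{α₀−β}). -/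
set_option autoImplicit false

open MeasureTheory ProbabilityTheory Finset

/-!
Write `𝕊ₙ = 𝕊_{n−L} + T` with `T` the sum of the last `L` steps, which is independent of
`𝕊_{n−L}`. On the event, the deficit `u − v − 𝕊_{n−L} ≥ 0` lies in some shell `[m, m + 1)`,
and then `𝕊_{n−L} ≥ u − v − (m + 1)` while `T > u − 𝕊_{n−L} ≥ v + m`. By independence each
shell has probability at most the product of the two tail probabilities, which the Chernoff bound
at `α₀` and at `β` makes geometric in `m` with ratio `e^{α₀ − β} < 1`.
-/

open Real

theorem exists_nat_shell {s t u v : ℝ} (hs : s ≤ u - v) (hst : u < s + t) :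
    ∃ m : ℕ, u - v - (m + 1) ≤ s ∧ v + m ≤ t := by
  have hdeficit : 0 ≤ u - v - s := by linarith
  refine ⟨⌊u - v - s⌋₊, ?_, ?_⟩
  · linarith [Nat.lt_floor_add_one (u - v - s)]
  · linarith [Nat.floor_le hdeficit]

theorem hasSum_shell_series {α β : ℝ} (hαβ : α < β) (a b u v : ℝ) :
    HasSum (fun m : ℕ => a * exp (-α * (u - v) + α * (m + 1)) * (b * exp (-β * v - β * m)))
      (a * b * exp (-α * u) * exp ((α - β) * v) * (exp α / (1 - exp (α - β)))) := by
  set K := a * b * exp (-α * u) * exp ((α - β) * v) * exp α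
  have hr : exp (α - β) < 1 := exp_lt_one_iff.mpr (by linarith)
  have hterm : ∀ m : ℕ, a * exp (-α * (u - v) + α * (m + 1)) * (b * exp (-β * v - β * m)) =
      K * exp (α - β) ^ m := fun m => by
    have hexp : exp (-α * (u - v) + α * (m + 1)) * exp (-β * v - β * m) =
        exp (-α * u) * exp ((α - β) * v) * exp α * exp (α - β) ^ m := by
      simp only [← exp_nat_mul, ← exp_add]
      ring_nf
    linear_combination a * b * hexp
  rw [show a * b * exp (-α * u) * exp ((α - β) * v) * (exp α / (1 - exp (α - β))) =
    K * (1 - exp (α - β))⁻¹ by ring]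
  simpa only [hterm] using (hasSum_geometric_of_lt_one (exp_pos _).le hr).mul_left K

namespace ProbabilityTheory

variable {Ω ι : Type*} [MeasurableSpace Ω] {μ : Measure Ω} {X : ι → Ω → ℝ}

theorem iIndepFun.measureReal_sum_ge_le (hindep : iIndepFun X μ) (hmeas : ∀ i, Measurable (X i))
    (s : Finset ι) {j : ι} (hident : ∀ i ∈ s, IdentDistrib (X i) (X j) μ μ) {t : ℝ} (ht : 0 ≤ t)
    (hint : Integrable (fun ω => exp (t * X j ω)) μ) (a : ℝ) :
    μ.real {ω | a ≤ ∑ i ∈ s, X i ω} ≤ exp (-t * a) * mgf (X j) μ t ^ s.card := by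
  have := hindep.isProbabilityMeasure
  have hexp : ∀ i ∈ s, IdentDistrib (fun ω => exp (t * X i ω)) (fun ω => exp (t * X j ω)) μ μ :=
    fun i hi => (hident i hi).comp (by fun_prop : Measurable fun x : ℝ => exp (t * x))
  have hint_sum := hindep.integrable_exp_mul_sum hmeas fun i hi =>
    (hexp i hi).integrable_iff.mpr hint
  have hmgf : mgf (∑ i ∈ s, X i) μ t = mgf (X j) μ t ^ s.card := by
    rw [hindep.mgf_sum hmeas, ← prod_const]
    exact prod_congr rfl fun i hi => (hexp i hi).integral_eq
  simpa only [Finset.sum_apply, hmgf] using measure_ge_le_exp_mul_mgf a ht hint_sum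

theorem iIndepFun.indepFun_finsetSum_of_disjoint (hindep : iIndepFun X μ)
    (hmeas : ∀ i, Measurable (X i)) {s t : Finset ι} (hst : Disjoint s t) :
    IndepFun (fun ω => ∑ i ∈ s, X i ω) (fun ω => ∑ i ∈ t, X i ω) μ := by
  have hsum : ∀ r : Finset ι, Measurable fun x : r → ℝ => ∑ i, x i :=
    fun r => Finset.univ.measurable_sum fun i _ => measurable_pi_apply i
  have hcoe : ∀ r : Finset ι,
      ((fun x : r → ℝ => ∑ i, x i) ∘ fun ω (i : r) => X i ω) = fun ω => ∑ i ∈ r, X i ω :=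
    fun r => funext fun ω => sum_coe_sort r fun i => X i ω
  rw [← hcoe s, ← hcoe t]
  exact (hindep.indepFun_finset s t hst hmeas).comp (hsum s) (hsum t)

theorem IndepFun.measureReal_le_tsum_shell [IsFiniteMeasure μ] {S T : Ω → ℝ}
    (hST : IndepFun S T μ) (u v : ℝ) {c : ℕ → ℝ} (hc : Summable c)
    (hshell : ∀ m : ℕ, μ.real {ω | u - v - (m + 1) ≤ S ω} * μ.real {ω | v + m ≤ T ω} ≤ c m) :
    μ.real {ω | S ω ≤ u - v ∧ u < S ω + T ω} ≤ ∑' m, c m := by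
  have hc0 : ∀ m, 0 ≤ c m := fun m => (mul_nonneg measureReal_nonneg measureReal_nonneg).trans
    (hshell m)
  set A : ℕ → Set Ω := fun m => S ⁻¹' Set.Ici (u - v - (m + 1))
  set B : ℕ → Set Ω := fun m => T ⁻¹' Set.Ici (v + m)
  have hcover : {ω | S ω ≤ u - v ∧ u < S ω + T ω} ⊆ ⋃ m, A m ∩ B m := fun ω ⟨hs, hst⟩ =>
    Set.mem_iUnion.2 (exists_nat_shell hs hst)
  have hAB : ∀ m, μ (A m ∩ B m) ≤ ENNReal.ofReal (c m) := fun m => by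
    rw [hST.measure_inter_preimage_eq_mul _ _ measurableSet_Ici measurableSet_Ici,
      ENNReal.le_ofReal_iff_toReal_le (by finiteness) (hc0 m), ENNReal.toReal_mul]
    exact hshell m
  refine ENNReal.toReal_le_of_le_ofReal (tsum_nonneg hc0) ?_
  calc μ {ω | S ω ≤ u - v ∧ u < S ω + T ω}
      ≤ ∑' m, μ (A m ∩ B m) := (measure_mono hcover).trans (measure_iUnion_le _)
    _ ≤ ∑' m, ENNReal.ofReal (c m) := ENNReal.tsum_le_tsum hAB
    _ = ENNReal.ofReal (∑' m, c m) := (ENNReal.ofReal_tsum_of_nonneg hc0 hc).symm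

end ProbabilityTheory

theorem walk_shell_decomposition_bound_general
    {Ω : Type*} [MeasurableSpace Ω] (μ : Measure Ω) [IsProbabilityMeasure μ]
    (X : ℕ → Ω → ℝ) (hmeas : ∀ i, Measurable (X i))
    (hindep : iIndepFun X μ)
    (hident : ∀ i, IdentDistrib (X i) (X 0) μ μ)
    (α₀ β : ℝ) (hα₀ : 0 < α₀) (hβ : α₀ < β)
    (hintα : Integrable (fun ω => Real.exp (α₀ * X 0 ω)) μ)
    (hintβ : Integrable (fun ω => Real.exp (β * X 0 ω)) μ)
    (u v : ℝ) (n L : ℕ) (hnL : L < n) :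
    (μ {ω | ∑ i ∈ Finset.range (n - L), X i ω ≤ u - v ∧
          u < ∑ i ∈ Finset.range n, X i ω}).toReal ≤
      (∑' m : ℕ, (∫ ω, Real.exp (α₀ * X 0 ω) ∂μ) ^ (n - L) *
          Real.exp (-α₀ * (u - v) + α₀ * (m + 1)) *
          ((∫ ω, Real.exp (β * X 0 ω) ∂μ) ^ L * Real.exp (-β * v - β * m))) ∧
    (∑' m : ℕ, (∫ ω, Real.exp (α₀ * X 0 ω) ∂μ) ^ (n - L) *
          Real.exp (-α₀ * (u - v) + α₀ * (m + 1)) *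
          ((∫ ω, Real.exp (β * X 0 ω) ∂μ) ^ L * Real.exp (-β * v - β * m))) =
      (∫ ω, Real.exp (α₀ * X 0 ω) ∂μ) ^ (n - L) * (∫ ω, Real.exp (β * X 0 ω) ∂μ) ^ L *
        Real.exp (-α₀ * u) * Real.exp ((α₀ - β) * v) *
        (Real.exp α₀ / (1 - Real.exp (α₀ - β))) := by
  have hseries := hasSum_shell_series hβ (mgf (X 0) μ α₀ ^ (n - L)) (mgf (X 0) μ β ^ L) u v
  refine ⟨?_, hseries.tsum_eq⟩
  have hsplit : ∀ ω, ∑ i ∈ range (n - L), X i ω + ∑ i ∈ Ico (n - L) n, X i ω =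
      ∑ i ∈ range n, X i ω := fun ω => sum_range_add_sum_Ico _ (by omega)
  simp only [← hsplit]
  have hdisj : Disjoint (range (n - L)) (Ico (n - L) n) :=
    range_eq_Ico (n - L) ▸ Ico_disjoint_Ico_consecutive 0 (n - L) n
  refine (hindep.indepFun_finsetSum_of_disjoint hmeas hdisj).measureReal_le_tsum_shell u v
    hseries.summable fun m => ?_
  have hhead := hindep.measureReal_sum_ge_le hmeas (range (n - L)) (fun i _ => hident i)
    hα₀.le hintα (u - v - (m + 1))
  have htail := hindep.measureReal_sum_ge_le hmeas (Ico (n - L) n) (fun i _ => hident i)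
    (hα₀.trans hβ).le hintβ (v + m)
  rw [card_range] at hhead
  rw [Nat.card_Ico, Nat.sub_sub_self hnL.le] at htail
  calc _ ≤ exp (-α₀ * (u - v - (m + 1))) * mgf (X 0) μ α₀ ^ (n - L) *
        (exp (-β * (v + m)) * mgf (X 0) μ β ^ L) :=
        mul_le_mul hhead htail measureReal_nonneg (measureReal_nonneg.trans hhead)
    _ = _ := by simp only [mgf]; ring_nf

/-- Shell decomposition bound for a random walk with i.i.d. steps having finite exponential
moments at `0 < α₀ < β`: for all `u, v` and integers `n > L ≥ 1`,
`ℙ[𝕊_{n−L} ≤ u−v, 𝕊ₙ > u] ≤ ∑_{m≥0} λ(α₀)^{n−L} e^{−α₀(u−v)+α₀(m+1)} λ(β)^L e^{−βv−βm}`,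
and the right-hand side equals
`λ(α₀)^{n−L} λ(β)^L e^{−α₀u} e^{(α₀−β)v} e^{α₀}/(1 − e^{α₀−β})`. -/
theorem walk_shell_decomposition_bound
    {Ω : Type*} [MeasurableSpace Ω] (μ : Measure Ω) [IsProbabilityMeasure μ]
    (X : ℕ → Ω → ℝ) (hmeas : ∀ i, Measurable (X i))
    (hindep : iIndepFun X μ)
    (hident : ∀ i, IdentDistrib (X i) (X 0) μ μ)
    (α₀ β : ℝ) (hα₀ : 0 < α₀) (hβ : α₀ < β)
    (hintα : Integrable (fun ω => Real.exp (α₀ * X 0 ω)) μ)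
    (hintβ : Integrable (fun ω => Real.exp (β * X 0 ω)) μ)
    (u v : ℝ) (n L : ℕ) (hL : 1 ≤ L) (hnL : L < n) :
    (μ {ω | ∑ i ∈ Finset.range (n - L), X i ω ≤ u - v ∧
          u < ∑ i ∈ Finset.range n, X i ω}).toReal ≤
      (∑' m : ℕ, (∫ ω, Real.exp (α₀ * X 0 ω) ∂μ) ^ (n - L) *
          Real.exp (-α₀ * (u - v) + α₀ * (m + 1)) *
          ((∫ ω, Real.exp (β * X 0 ω) ∂μ) ^ L * Real.exp (-β * v - β * m))) ∧
    (∑' m : ℕ, (∫ ω, Real.exp (α₀ * X 0 ω) ∂μ) ^ (n - L) *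
          Real.exp (-α₀ * (u - v) + α₀ * (m + 1)) *
          ((∫ ω, Real.exp (β * X 0 ω) ∂μ) ^ L * Real.exp (-β * v - β * m))) =
      (∫ ω, Real.exp (α₀ * X 0 ω) ∂μ) ^ (n - L) * (∫ ω, Real.exp (β * X 0 ω) ∂μ) ^ L *
        Real.exp (-α₀ * u) * Real.exp ((α₀ - β) * v) *
        (Real.exp α₀ / (1 - Real.exp (α₀ - β))) :=
  walk_shell_decomposition_bound_general μ X hmeas hindep hident α₀ β hα₀ hβ hintα hintβ u v n L hnL
end

section
/- Branching random walk LLN-type upper bound: let the displacement X satisfy ψ(s) := N 𝔼[e^{sX}] with ψ(α₀) = 1 for some α₀ > 0 and ψ finite in a neighbourhood of α₀, ρ₀ = Ψ'(α₀) > 0 where Ψ = log ψ. Set n_u = u/ρ₀. For every δ > 0 there exist b, C > 0 such that for all large u, ℙ[τ_u ≤ n_u − b√(n_u log n_u)] ≤ C e^{−α₀ u} u^{−δ}, where τ_u is the first generation at which some particle of the branching random walk exceeds level u. -/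
/-!
Union bound plus a Chernoff bound along each path, tilted slightly beyond `α₀`. A vertex of
generation `k` is above `u` with probability at most `E[e^{(α₀+θ)X}]^k e^{-(α₀+θ)u}`, and there are
`N^k` of them, so generation `k` contributes at most `ψ(α₀+θ)^k e^{-(α₀+θ)u}`. Since
`Ψ = log ψ` is analytic at `α₀` with `Ψ(α₀) = 0` and `Ψ'(α₀) = ρ₀`, we have
`Ψ(α₀+θ) ≤ ρ₀θ + Kθ²` for small `θ ≥ 0`. Write `n = u/ρ₀` and take `θ = √(log n / n)`, so that
`nθ² = log n`. Then summing the generations `k ≤ n - b√(n log n)` gives at most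
`n e^{-α₀u} e^{(K - ρ₀b) log n}`, and `ρ₀b = K + 1 + δ` turns this into `e^{-α₀u} n^{-δ}`.
-/

set_option autoImplicit false

open MeasureTheory ProbabilityTheory Finset Filter Topology

theorem AnalyticAt.isBigO_sub_sub_mul_sq {f : ℝ → ℝ} {a f' : ℝ} (hf : AnalyticAt ℝ f a)
    (hd : HasDerivAt f f' a) :
    (fun h => f (a + h) - f a - f' * h) =O[𝓝 0] fun h => h ^ 2 := by
  obtain ⟨p, hp⟩ := hf
  have hf' : f' = p.coeff 1 := hd.deriv.symm.trans hp.deriv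
  have hf₀ : f a = p.coeff 0 := by simp [FormalMultilinearSeries.coeff, hp.coeff_zero]
  have := hp.isBigO_sub_partialSum_pow 2
  simp only [FormalMultilinearSeries.partialSum, FormalMultilinearSeries.apply_eq_pow_smul_coeff,
    smul_eq_mul, sum_range_succ, sum_range_zero, Real.norm_eq_abs, sq_abs] at this
  refine this.congr_left fun h => ?_
  rw [hf', hf₀]
  ring

theorem tendsto_sqrt_log_div_self_atTop :
    Tendsto (fun x => √(Real.log x / x)) atTop (𝓝 0) := by
  rw [← Real.sqrt_zero]
  exact (Real.continuous_sqrt.tendsto 0).comp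
    (by simpa using Real.isLittleO_log_id_atTop.tendsto_div_nhds_zero)

theorem sum_Icc_floor_pow_le {q a x : ℝ} (hq₀ : 0 ≤ q) (hq : q ≤ Real.exp a) (ha : 0 ≤ a) :
    ∑ k ∈ Icc 1 ⌊x⌋₊, q ^ k ≤ ⌊x⌋₊ * Real.exp (x * a) := by
  calc ∑ k ∈ Icc 1 ⌊x⌋₊, q ^ k ≤ ∑ _k ∈ Icc 1 ⌊x⌋₊, Real.exp (x * a) := by
        refine sum_le_sum fun k hk => ?_
        have hkx : (k : ℝ) ≤ x := (Nat.le_floor_iff' (by grind)).mp (mem_Icc.1 hk).2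
        calc q ^ k ≤ Real.exp a ^ k := pow_le_pow_left₀ hq₀ hq k
          _ = Real.exp (k * a) := (Real.exp_nat_mul a k).symm
          _ ≤ Real.exp (x * a) := by gcongr
    _ = ⌊x⌋₊ * Real.exp (x * a) := by simp

theorem tilted_exponent_le {ρ K δ n : ℝ} (hρ : 0 < ρ) (hK : 0 ≤ K) (hδ : 0 ≤ δ) (hn : 1 ≤ n) :
    (n - (K + 1 + δ) / ρ * √(n * Real.log n)) *
        (ρ * √(Real.log n / n) + K * √(Real.log n / n) ^ 2) - √(Real.log n / n) * (ρ * n) ≤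
      -(1 + δ) * Real.log n := by
  set L := Real.log n
  set θ := √(L / n)
  set b := (K + 1 + δ) / ρ
  have hL : 0 ≤ L := Real.log_nonneg hn
  have hnθ : n * θ ^ 2 = L := by
    rw [Real.sq_sqrt (by positivity)]
    field_simp
  have hsqrt : √(n * L) = n * θ := by
    rw [← hnθ, ← mul_assoc, ← sq, ← mul_pow, Real.sqrt_sq (by positivity)]
  have hρb : ρ * b = K + 1 + δ := by simp only [b]; field_simp
  have hbKθL : 0 ≤ b * K * θ * L := by positivity
  calc (n - b * √(n * L)) * (ρ * θ + K * θ ^ 2) - θ * (ρ * n)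
      = K * L - ρ * b * L - b * K * θ * L := by rw [hsqrt, ← hnθ]; ring
    _ ≤ -(1 + δ) * L := by rw [hρb]; linarith

theorem natFloor_mul_exp_tilted_le {ρ K δ α u : ℝ} (hρ : 0 < ρ) (hK : 0 ≤ K) (hδ : 0 ≤ δ)
    (hu : ρ ≤ u) :
    ⌊u / ρ - (K + 1 + δ) / ρ * √(u / ρ * Real.log (u / ρ))⌋₊ *
        Real.exp ((u / ρ - (K + 1 + δ) / ρ * √(u / ρ * Real.log (u / ρ))) *
          (ρ * √(Real.log (u / ρ) / (u / ρ)) + K * √(Real.log (u / ρ) / (u / ρ)) ^ 2)) *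
        Real.exp (-(α + √(Real.log (u / ρ) / (u / ρ))) * u) ≤
      ρ ^ δ * Real.exp (-α * u) * u ^ (-δ) := by
  set n := u / ρ with hn_def
  have hn : 1 ≤ n := (one_le_div hρ).2 hu
  have hu_eq : u = ρ * n := by rw [hn_def]; field_simp
  set x := n - (K + 1 + δ) / ρ * √(n * Real.log n)
  set θ := √(Real.log n / n)
  have hx : (⌊x⌋₊ : ℝ) ≤ n := by
    have : x ≤ n := sub_le_self n (by positivity)
    exact (Nat.cast_le.2 (Nat.floor_le_floor this)).trans (Nat.floor_le (by linarith))
  have hnδ : n * Real.exp (-(1 + δ) * Real.log n) = n ^ (-δ) := by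
    rw [Real.rpow_def_of_pos (by linarith)]
    nth_rw 1 [← Real.exp_log (by linarith : 0 < n)]
    rw [← Real.exp_add]
    ring_nf
  have hnu : n ^ (-δ) = ρ ^ δ * u ^ (-δ) := by
    rw [hn_def, Real.div_rpow (by linarith) hρ.le, Real.rpow_neg hρ.le, div_inv_eq_mul, mul_comm]
  calc ⌊x⌋₊ * Real.exp (x * (ρ * θ + K * θ ^ 2)) * Real.exp (-(α + θ) * u)
      = ⌊x⌋₊ * Real.exp (x * (ρ * θ + K * θ ^ 2) - θ * (ρ * n)) * Real.exp (-α * u) := by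
        rw [mul_assoc, mul_assoc, ← Real.exp_add, ← Real.exp_add, hu_eq]
        ring_nf
    _ ≤ n * Real.exp (-(1 + δ) * Real.log n) * Real.exp (-α * u) := by
        gcongr
        exact tilted_exponent_le hρ hK hδ hn
    _ = ρ ^ δ * Real.exp (-α * u) * u ^ (-δ) := by rw [hnδ, hnu]; ring

namespace ProbabilityTheory

variable {Ω ι : Type*} {m : MeasurableSpace Ω} {μ : Measure Ω} {Y : Ω → ℝ}

theorem mem_interior_integrableExpSet_of_lt [IsFiniteMeasure μ] {a b : ℝ} (ha : 0 < a)
    (hab : a < b) (hb : Integrable (fun ω => Real.exp (b * Y ω)) μ) :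
    a ∈ interior (integrableExpSet Y μ) :=
  interior_mono
    (fun t (ht : t ∈ Set.Ioo 0 b) => integrable_exp_mul_of_nonneg_of_le hb ht.1.le ht.2.le)
    (by rw [isOpen_Ioo.interior_eq]; exact ⟨ha, hab⟩)

theorem exists_pos_eventually_mul_mgf_le_exp {a c ρ : ℝ}
    (ha : a ∈ interior (integrableExpSet Y μ)) (h_one : c * mgf Y μ a = 1)
    (hρ : HasDerivAt (fun s => Real.log (c * mgf Y μ s)) ρ a) :
    ∃ K > 0, ∀ᶠ θ in 𝓝 0, c * mgf Y μ (a + θ) ≤ Real.exp (ρ * θ + K * θ ^ 2) := by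
  have h_analytic : AnalyticAt ℝ (fun s => Real.log (c * mgf Y μ s)) a :=
    (analyticAt_const.mul (analyticAt_mgf ha)).log (by simp [h_one])
  obtain ⟨K, hK, hO⟩ := (h_analytic.isBigO_sub_sub_mul_sq hρ).exists_pos
  refine ⟨K, hK, hO.bound.mono fun θ hθ => ?_⟩
  simp only [h_one, Real.log_one, sub_zero, Real.norm_eq_abs, abs_of_nonneg (sq_nonneg θ)] at hθ
  have := (le_abs_self _).trans hθ
  exact (Real.le_exp_log _).trans (Real.exp_le_exp.2 (by linarith))

theorem iIndepFun.measureReal_ge_sum_le_exp_mul_mgf_pow {X : ι → Ω → ℝ}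
    (h_indep : iIndepFun X μ) (h_meas : ∀ i, Measurable (X i))
    (h_ident : ∀ i, IdentDistrib (X i) Y μ μ) {t : ℝ} (ht : 0 ≤ t)
    (h_int : Integrable (fun ω => Real.exp (t * Y ω)) μ) (s : Finset ι) (ε : ℝ) :
    μ.real {ω | ε ≤ ∑ i ∈ s, X i ω} ≤ Real.exp (-t * ε) * mgf Y μ t ^ #s := by
  have := h_indep.isProbabilityMeasure
  have h_int_i (i : ι) : Integrable (fun ω => Real.exp (t * X i ω)) μ :=
    ((h_ident i).comp (measurable_const_mul t).exp).integrable_iff.mpr h_int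
  have h_chernoff := measure_ge_le_exp_mul_mgf ε ht
    (h_indep.integrable_exp_mul_sum h_meas fun i _ => h_int_i i) (X := ∑ i ∈ s, X i)
  rw [h_indep.mgf_sum h_meas, prod_congr rfl fun i _ =>
    mgf_congr_of_identDistrib (X i) Y (h_ident i) t, prod_const] at h_chernoff
  simpa only [Finset.sum_apply] using h_chernoff

end ProbabilityTheory

def List.pathVertices {α : Type*} [DecidableEq α] (γ : List α) : Finset (List α) :=
  (Finset.range γ.length).image fun k => γ.take (k + 1)

theorem List.injOn_take_succ {α : Type*} (γ : List α) :
    Set.InjOn (fun k => γ.take (k + 1)) (Finset.range γ.length) := by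
  intro a ha b hb hab
  have := congrArg List.length hab
  simp only [List.length_take, coe_range, Set.mem_Iio] at this ha hb
  omega

theorem List.card_pathVertices {α : Type*} [DecidableEq α] (γ : List α) :
    #γ.pathVertices = γ.length := by
  rw [List.pathVertices, card_image_of_injOn γ.injOn_take_succ, card_range]

theorem List.sum_pathVertices {α M : Type*} [DecidableEq α] [AddCommMonoid M] (γ : List α)
    (f : List α → M) :
    ∑ v ∈ γ.pathVertices, f v = ∑ k ∈ Finset.range γ.length, f (γ.take (k + 1)) :=
  sum_image γ.injOn_take_succ

section BranchingRandomWalk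

variable {Ω : Type*} [MeasurableSpace Ω] {μ : Measure Ω} {N : ℕ}
  {X S : List (Fin N) → Ω → ℝ}

theorem measureReal_position_gt_le_exp_mul_mgf_pow (hXmeas : ∀ γ, Measurable (X γ))
    (hXindep : iIndepFun X μ) (hXident : ∀ γ, IdentDistrib (X γ) (X []) μ μ)
    (hS : ∀ γ ω, S γ ω = ∑ k ∈ Finset.range γ.length, X (γ.take (k + 1)) ω)
    {s : ℝ} (hs : 0 ≤ s) (hint : Integrable (fun ω => Real.exp (s * X [] ω)) μ)
    (γ : List (Fin N)) (u : ℝ) :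
    μ.real {ω | u < S γ ω} ≤ Real.exp (-s * u) * mgf (X []) μ s ^ γ.length := by
  have := hXindep.isProbabilityMeasure
  calc μ.real {ω | u < S γ ω} ≤ μ.real {ω | u ≤ ∑ v ∈ γ.pathVertices, X v ω} :=
        measureReal_mono fun ω hω => by
          simpa only [Set.mem_ofPred_eq, γ.sum_pathVertices, ← hS] using hω.le
    _ ≤ Real.exp (-s * u) * mgf (X []) μ s ^ γ.length := by
        rw [← γ.card_pathVertices]
        exact hXindep.measureReal_ge_sum_le_exp_mul_mgf_pow hXmeas hXident hs hint _ u

theorem measureReal_exists_crossing_le (hXmeas : ∀ γ, Measurable (X γ))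
    (hXindep : iIndepFun X μ) (hXident : ∀ γ, IdentDistrib (X γ) (X []) μ μ)
    (hS : ∀ γ ω, S γ ω = ∑ k ∈ Finset.range γ.length, X (γ.take (k + 1)) ω)
    {s : ℝ} (hs : 0 ≤ s) (hint : Integrable (fun ω => Real.exp (s * X [] ω)) μ) (x u : ℝ) :
    μ.real {ω | ∃ γ : List (Fin N), 1 ≤ γ.length ∧ (γ.length : ℝ) ≤ x ∧ u < S γ ω} ≤
      (∑ k ∈ Icc 1 ⌊x⌋₊, (N * mgf (X []) μ s) ^ k) * Real.exp (-s * u) := by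
  have := hXindep.isProbabilityMeasure
  have hsub : {ω | ∃ γ : List (Fin N), 1 ≤ γ.length ∧ (γ.length : ℝ) ≤ x ∧ u < S γ ω} ⊆
      ⋃ k ∈ Icc 1 ⌊x⌋₊, ⋃ f : Fin k → Fin N, {ω | u < S (List.ofFn f) ω} := by
    rintro ω ⟨γ, hγ₁, hγx, hγu⟩
    simp only [Set.mem_iUnion, mem_Icc]
    exact ⟨γ.length, ⟨hγ₁, Nat.le_floor hγx⟩, γ.get, by simpa using hγu⟩
  calc _ ≤ ∑ k ∈ Icc 1 ⌊x⌋₊, ∑ f : Fin k → Fin N, μ.real {ω | u < S (List.ofFn f) ω} :=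
        (measureReal_mono hsub (measure_ne_top _ _)).trans <|
          (measureReal_biUnion_finset_le _ _).trans <|
            sum_le_sum fun k _ => measureReal_iUnion_fintype_le _
    _ ≤ ∑ k ∈ Icc 1 ⌊x⌋₊, ∑ f : Fin k → Fin N, Real.exp (-s * u) * mgf (X []) μ s ^ k := by
        gcongr with k _ f
        simpa using measureReal_position_gt_le_exp_mul_mgf_pow hXmeas hXindep hXident hS hs hint
          (List.ofFn f) u
    _ = (∑ k ∈ Icc 1 ⌊x⌋₊, (N * mgf (X []) μ s) ^ k) * Real.exp (-s * u) := by
        simp only [sum_const, card_univ, Fintype.card_fun, Fintype.card_fin, nsmul_eq_mul,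
          sum_mul, mul_pow, Nat.cast_pow]
        exact sum_congr rfl fun k _ => by ring

end BranchingRandomWalk

theorem brw_first_passage_early_crossing_bound_general
    {Ω : Type*} [MeasurableSpace Ω] (μ : Measure Ω) [IsProbabilityMeasure μ]
    (N : ℕ)
    (X : List (Fin N) → Ω → ℝ) (hXmeas : ∀ γ, Measurable (X γ))
    (hXindep : iIndepFun X μ)
    (hXident : ∀ γ, IdentDistrib (X γ) (X []) μ μ)
    (S : List (Fin N) → Ω → ℝ)
    (hS : ∀ γ ω, S γ ω = ∑ k ∈ Finset.range γ.length, X (γ.take (k + 1)) ω)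
    (α₀ : ℝ) (hα₀ : 0 < α₀)
    (ε₀ : ℝ) (hε₀ : 0 < ε₀)
    (hintε : Integrable (fun ω => Real.exp ((α₀ + ε₀) * X [] ω)) μ)
    (hψ1 : (N : ℝ) * ∫ ω, Real.exp (α₀ * X [] ω) ∂μ = 1)
    (ρ₀ : ℝ)
    (hρ₀ : HasDerivAt (fun s => Real.log ((N : ℝ) * ∫ ω, Real.exp (s * X [] ω) ∂μ)) ρ₀ α₀)
    (hρ₀pos : 0 < ρ₀) :
    ∀ δ > (0 : ℝ), ∃ b > (0 : ℝ), ∃ C > (0 : ℝ), ∃ u₀ : ℝ, ∀ u ≥ u₀,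
      (μ {ω | ∃ γ : List (Fin N), 1 ≤ γ.length ∧
          (γ.length : ℝ) ≤ u / ρ₀ - b * Real.sqrt (u / ρ₀ * Real.log (u / ρ₀)) ∧
          u < S γ ω}).toReal ≤
        C * Real.exp (-α₀ * u) * u ^ (-δ) := by
  intro δ hδ
  have hα₀_mem := mem_interior_integrableExpSet_of_lt hα₀ (lt_add_of_pos_right α₀ hε₀) hintε
  obtain ⟨K, hK, hψ⟩ := exists_pos_eventually_mul_mgf_le_exp hα₀_mem hψ1 hρ₀
  have hint : ∀ᶠ θ in 𝓝 0, Integrable (fun ω => Real.exp ((α₀ + θ) * X [] ω)) μ :=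
    ((continuous_const_add α₀).tendsto' 0 α₀ (add_zero α₀)).eventually
      (isOpen_interior.eventually_mem hα₀_mem) |>.mono
        fun _ h => interior_subset (s := integrableExpSet _ _) h
  have hθ := tendsto_sqrt_log_div_self_atTop.comp (tendsto_id.atTop_div_const hρ₀pos)
  obtain ⟨u₀, hu₀⟩ := eventually_atTop.1 <|
    (hθ.eventually (hint.and hψ)).and (eventually_ge_atTop ρ₀)
  refine ⟨(K + 1 + δ) / ρ₀, by positivity, ρ₀ ^ δ, by positivity, u₀, fun u hu => ?_⟩
  obtain ⟨⟨hint_u, hψ_u⟩, hρ₀u⟩ := hu₀ u hu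
  set θ := √(Real.log (u / ρ₀) / (u / ρ₀))
  have hθ₀ : 0 ≤ θ := Real.sqrt_nonneg _
  calc _ ≤ (∑ k ∈ Icc 1 ⌊u / ρ₀ - (K + 1 + δ) / ρ₀ * √(u / ρ₀ * Real.log (u / ρ₀))⌋₊,
          ((N : ℝ) * mgf (X []) μ (α₀ + θ)) ^ k) * Real.exp (-(α₀ + θ) * u) :=
        measureReal_exists_crossing_le hXmeas hXindep hXident hS (by positivity) hint_u _ u
    _ ≤ _ := by
        gcongr
        exact sum_Icc_floor_pow_le (mul_nonneg N.cast_nonneg mgf_nonneg) hψ_u (by positivity)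
    _ ≤ ρ₀ ^ δ * Real.exp (-α₀ * u) * u ^ (-δ) :=
        natFloor_mul_exp_tilted_le hρ₀pos hK.le hδ.le hρ₀u

/-- LLN-type upper bound for the branching random walk first passage time: with
`ψ(s) = N 𝔼[e^{sX}]`, `ψ(α₀) = 1`, `Ψ = log ψ` finite near `α₀`, `ρ₀ = Ψ'(α₀) > 0` and
`n_u = u/ρ₀`: for every `δ > 0` there are `b, C > 0` such that for all large `u`,
`ℙ[τ_u ≤ n_u − b√(n_u log n_u)] ≤ C e^{−α₀ u} u^{−δ}`. -/
theorem brw_first_passage_early_crossing_bound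
    {Ω : Type*} [MeasurableSpace Ω] (μ : Measure Ω) [IsProbabilityMeasure μ]
    (N : ℕ) (hN : 1 ≤ N)
    (X : List (Fin N) → Ω → ℝ) (hXmeas : ∀ γ, Measurable (X γ))
    (hXindep : iIndepFun X μ)
    (hXident : ∀ γ, IdentDistrib (X γ) (X []) μ μ)
    (S : List (Fin N) → Ω → ℝ)
    (hS : ∀ γ ω, S γ ω = ∑ k ∈ Finset.range γ.length, X (γ.take (k + 1)) ω)
    (hdrift : ∫ ω, X [] ω ∂μ < 0)
    (α₀ : ℝ) (hα₀ : 0 < α₀)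
    (ε₀ : ℝ) (hε₀ : 0 < ε₀)
    (hintε : Integrable (fun ω => Real.exp ((α₀ + ε₀) * X [] ω)) μ)
    (hψ1 : (N : ℝ) * ∫ ω, Real.exp (α₀ * X [] ω) ∂μ = 1)
    (ρ₀ : ℝ)
    (hρ₀ : HasDerivAt (fun s => Real.log ((N : ℝ) * ∫ ω, Real.exp (s * X [] ω) ∂μ)) ρ₀ α₀)
    (hρ₀pos : 0 < ρ₀) :
    ∀ δ > (0 : ℝ), ∃ b > (0 : ℝ), ∃ C > (0 : ℝ), ∃ u₀ : ℝ, ∀ u ≥ u₀,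
      (μ {ω | ∃ γ : List (Fin N), 1 ≤ γ.length ∧
          (γ.length : ℝ) ≤ u / ρ₀ - b * Real.sqrt (u / ρ₀ * Real.log (u / ρ₀)) ∧
          u < S γ ω}).toReal ≤
        C * Real.exp (-α₀ * u) * u ^ (-δ) :=
  brw_first_passage_early_crossing_bound_general μ N X hXmeas hXindep hXident S hS α₀ hα₀ ε₀ hε₀
    hintε hψ1 ρ₀ hρ₀ hρ₀pos
end
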